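/- arXiv:2311.09465 — 2 statements merged into one kernel-verified Lean document; each statement's English description precedes it below -/
import Mathlib

section
/- (Stability of the GLS form, one-dimensional Dirichlet case.) Let N ≥ 1, ω ∈ ℝ, M = 2N−1, let Ω be the time-derivative matrix, let u : ℤ → ℂ satisfy u_{−k} = conj(u_k) and u_k = 0 for |k| ≥ N with convolution matrix A, let κ > 0, L > 0, and let τ : [0,L] → ℂ^{M×M} be continuous with τ(x) Hermitian positive semidefinite for every x ∈ [0,L]. Suppose w : ℝ → ℂ^M is twice continuously differentiable on [0,L], satisfies w(0) = w(L) = 0, and is pointwise conjugate-symmetric, i.e. w_{−n}(x) = conj(w_n(x)) for all n and x. Define the residual r(x) := Ω w(x) + A w′(x) − κ w″(x) and the GLS form b(w,w) := ∫₀^L [w^H Ω w + w^H A w′ + κ·w′^H w′ + r^H τ r] dx. Then b(w,w) = κ ∫₀^L ‖w′(x)‖² dx + ∫₀^L r(x)^H τ(x) r(x) dx; in particular b(w,w) is a nonnegative real number. -/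
open Matrix ComplexOrder

/-- The time-derivative matrix `Ω` of size `2N-1`, indexed by `n = i - (N-1)` for
`i : Fin (2N-1)`, with diagonal entries `i·n·ω`. -/
noncomputable def timeDerivMat (N : ℕ) (ω : ℝ) :
    Matrix (Fin (2 * N - 1)) (Fin (2 * N - 1)) ℂ :=
  Matrix.diagonal fun i => Complex.I * (((i.val : ℤ) - ((N : ℤ) - 1) : ℤ) : ℂ) * (ω : ℂ)

/-- The convolution matrix `A` with entries `A_{mn} = u_{m-n}`. -/
noncomputable def convMat (N : ℕ) (u : ℤ → ℂ) :
    Matrix (Fin (2 * N - 1)) (Fin (2 * N - 1)) ℂ :=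
  fun i j => u ((i.val : ℤ) - (j.val : ℤ))

/-- The residual `r = Ω w + A w' − κ w''` of the 1D time-spectral
convection–diffusion operator. -/
noncomputable def glsResidual (N : ℕ) (ω : ℝ) (u : ℤ → ℂ) (κ : ℝ)
    (w w' w'' : ℝ → Fin (2 * N - 1) → ℂ) (x : ℝ) : Fin (2 * N - 1) → ℂ :=
  (timeDerivMat N ω).mulVec (w x) + (convMat N u).mulVec (w' x) - (κ : ℂ) • w'' x

/-- The GLS form `b(w,w) = ∫₀^L [w^H Ω w + w^H A w' + κ w'^H w' + r^H τ r] dx`. -/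
noncomputable def glsForm (N : ℕ) (ω : ℝ) (u : ℤ → ℂ) (κ L : ℝ)
    (τ : ℝ → Matrix (Fin (2 * N - 1)) (Fin (2 * N - 1)) ℂ)
    (w w' w'' : ℝ → Fin (2 * N - 1) → ℂ) : ℂ :=
  ∫ x in (0 : ℝ)..L,
    (star (w x) ⬝ᵥ (timeDerivMat N ω).mulVec (w x)
      + star (w x) ⬝ᵥ (convMat N u).mulVec (w' x)
      + (κ : ℂ) * (star (w' x) ⬝ᵥ w' x)
      + star (glsResidual N ω u κ w w' w'' x) ⬝ᵥ
          (τ x).mulVec (glsResidual N ω u κ w w' w'' x))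

/-!
The `Ω`-term vanishes pointwise: `Ω` is diagonal with entries odd under `n ↦ -n`, while
conjugate symmetry gives `|w_{-n}| = |w_n|`. The `A`-term integrates to zero: the Toeplitz
matrix `A` is persymmetric, which for conjugate-symmetric `w` (hence `w'`) makes
`w'^H A w = w^H A w'`, so `w^H A w'` is half the derivative of `w^H A w`, and that vanishes at
both ends. What is left is `κ ‖w'‖² + r^H τ r ≥ 0`.
-/

open Set MeasureTheory

section ContinuousOn

variable {X R : Type*} [TopologicalSpace X] [TopologicalSpace R] {s : Set X}

theorem ContinuousOn.dotProduct {n : Type*} [Fintype n] [Mul R] [AddCommMonoid R]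
    [ContinuousAdd R] [ContinuousMul R] {f g : X → n → R}
    (hf : ContinuousOn f s) (hg : ContinuousOn g s) :
    ContinuousOn (fun x => f x ⬝ᵥ g x) s :=
  (continuous_fst.dotProduct continuous_snd).comp_continuousOn (hf.prodMk hg)

theorem ContinuousOn.matrix_mulVec {m n : Type*} [Fintype n] [NonUnitalNonAssocSemiring R]
    [ContinuousAdd R] [ContinuousMul R] {A : X → Matrix m n R} {g : X → n → R}
    (hA : ContinuousOn A s) (hg : ContinuousOn g s) :
    ContinuousOn (fun x => A x *ᵥ g x) s :=
  (continuous_fst.matrix_mulVec continuous_snd).comp_continuousOn (hA.prodMk hg)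

end ContinuousOn

section HasDerivWithinAt

variable {𝕜 𝔸 : Type*} [NontriviallyNormedField 𝕜] [NormedRing 𝔸] [NormedAlgebra 𝕜 𝔸]
  {n : Type*} [Fintype n] {f g : 𝕜 → n → 𝔸} {f' g' : n → 𝔸} {s : Set 𝕜} {x : 𝕜}

theorem HasDerivWithinAt.dotProduct (hf : HasDerivWithinAt f f' s x)
    (hg : HasDerivWithinAt g g' s x) :
    HasDerivWithinAt (fun t => f t ⬝ᵥ g t) (f' ⬝ᵥ g x + f x ⬝ᵥ g') s x := by
  simp only [_root_.dotProduct, ← Finset.sum_add_distrib]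
  exact HasDerivWithinAt.fun_sum fun i _ =>
    (hasDerivWithinAt_pi.1 hf i).fun_mul (hasDerivWithinAt_pi.1 hg i)

theorem HasDerivWithinAt.matrix_mulVec {m : Type*} (A : Matrix m n 𝔸)
    (hg : HasDerivWithinAt g g' s x) :
    HasDerivWithinAt (fun t => A *ᵥ g t) (A *ᵥ g') s x :=
  hasDerivWithinAt_pi.2 fun i => by
    simpa [mulVec] using (hasDerivWithinAt_const x s (A i)).dotProduct hg

end HasDerivWithinAt

theorem Fin.intCast_val_rev {n : ℕ} (i : Fin n) : ((Fin.rev i : ℕ) : ℤ) = n - 1 - i := by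
  have := i.isLt
  rw [Fin.val_rev]
  omega

-- Under the index shift `i = n + (N - 1)` used above, `Fin.rev` is `n ↦ -n`.
def IsConjSymm {R : Type*} [Star R] {n : ℕ} (v : Fin n → R) : Prop :=
  ∀ i, v (Fin.rev i) = star (v i)

def Matrix.IsPersymm {R : Type*} {n : ℕ} (B : Matrix (Fin n) (Fin n) R) : Prop :=
  ∀ i j, B (Fin.rev i) (Fin.rev j) = B j i

section Algebra

variable {R : Type*} [CommRing R] [StarRing R] {n : ℕ}

theorem IsConjSymm.star_dotProduct_diagonal_mulVec_self [IsAddTorsionFree R]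
    {v d : Fin n → R} (hv : IsConjSymm v) (hd : ∀ i, d (Fin.rev i) = -d i) :
    star v ⬝ᵥ diagonal d *ᵥ v = 0 := by
  set f : Fin n → R := fun i => star (v i) * (d i * v i)
  have hodd : ∑ i, f (Fin.rev i) = -∑ i, f i := by
    rw [← Finset.sum_neg_distrib]
    refine Finset.sum_congr rfl fun i _ => ?_
    simp only [f, hv i, hd i, star_star]
    ring
  have hrev : ∑ i, f (Fin.rev i) = ∑ i, f i := Equiv.sum_comp Fin.revPerm f
  simpa [dotProduct, mulVec_diagonal, f, hodd] using self_eq_neg.1 (hrev.symm.trans hodd)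

theorem Matrix.IsPersymm.star_dotProduct_mulVec_comm {B : Matrix (Fin n) (Fin n) R}
    (hB : B.IsPersymm) {v v' : Fin n → R} (hv : IsConjSymm v) (hv' : IsConjSymm v') :
    star v' ⬝ᵥ B *ᵥ v = star v ⬝ᵥ B *ᵥ v' := by
  simp only [dotProduct, mulVec, Finset.mul_sum, Pi.star_apply]
  rw [Finset.sum_comm]
  refine Fintype.sum_equiv Fin.revPerm _ _ fun j =>
    Fintype.sum_equiv Fin.revPerm _ _ fun i => ?_
  rw [Fin.revPerm_apply, Fin.revPerm_apply, hv, hv', hB, star_star]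
  ring

end Algebra

theorem timeDerivMat_star_dotProduct_mulVec_self {N : ℕ} (ω : ℝ) {v : Fin (2 * N - 1) → ℂ}
    (hv : IsConjSymm v) : star v ⬝ᵥ timeDerivMat N ω *ᵥ v = 0 := by
  refine hv.star_dotProduct_diagonal_mulVec_self fun i => ?_
  have : ((Fin.rev i : ℕ) : ℤ) - ((N : ℤ) - 1) = -((i : ℤ) - ((N : ℤ) - 1)) := by
    have := i.isLt
    rw [Fin.intCast_val_rev]
    omega
  rw [this, Int.cast_neg]
  ring

theorem convMat_isPersymm (N : ℕ) (u : ℤ → ℂ) : (convMat N u).IsPersymm := by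
  intro i j
  simp only [convMat, Fin.intCast_val_rev]
  ring_nf

theorem HasDerivWithinAt.isConjSymm {n : ℕ} {w : ℝ → Fin n → ℂ} {w' : Fin n → ℂ}
    {s : Set ℝ} {x : ℝ} (hw : HasDerivWithinAt w w' s x) (hs : UniqueDiffWithinAt ℝ s x)
    (hx : x ∈ s) (hsym : ∀ t ∈ s, IsConjSymm (w t)) : IsConjSymm w' := fun i =>
  hs.eq_deriv s (hasDerivWithinAt_pi.1 hw (Fin.rev i))
    ((hasDerivWithinAt_pi.1 hw i).star.congr_of_mem (fun t ht => hsym t ht i) hx)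

theorem star_dotProduct_self_eq_sum_norm_sq {n : Type*} [Fintype n] (v : n → ℂ) :
    star v ⬝ᵥ v = ((∑ i, ‖v i‖ ^ 2 : ℝ) : ℂ) := by
  simp [dotProduct, Complex.conj_mul']

theorem intervalIntegral.integral_complex_nonneg {f : ℝ → ℂ} {a b : ℝ} (hab : a ≤ b)
    (hf : ∀ x ∈ Icc a b, 0 ≤ f x) : 0 ≤ ∫ x in a..b, f x := by
  have hreal : EqOn f (fun x => ((f x).re : ℂ)) (uIcc a b) := by
    rw [uIcc_of_le hab]
    exact fun x hx => Complex.eq_re_of_ofReal_le (r := 0) (by simpa using hf x hx)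
  rw [integral_congr hreal, integral_ofReal, Complex.zero_le_real]
  exact integral_nonneg hab fun x hx => (Complex.nonneg_iff.1 (hf x hx)).1

theorem Matrix.IsPersymm.integral_star_dotProduct_mulVec_deriv_eq_zero {n : ℕ}
    {B : Matrix (Fin n) (Fin n) ℂ} (hB : B.IsPersymm) {w w' : ℝ → Fin n → ℂ} {a b : ℝ}
    (hab : a < b) (hw : ∀ x ∈ Icc a b, HasDerivWithinAt w (w' x) (Icc a b) x)
    (hw' : ContinuousOn w' (Icc a b)) (hsym : ∀ x ∈ Icc a b, IsConjSymm (w x))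
    (ha : w a = 0) (hb : w b = 0) :
    ∫ x in a..b, star (w x) ⬝ᵥ B *ᵥ w' x = 0 := by
  have hderiv : ∀ x ∈ Icc a b, HasDerivWithinAt (fun t => star (w t) ⬝ᵥ B *ᵥ w t)
      (2 * (star (w x) ⬝ᵥ B *ᵥ w' x)) (Icc a b) x := by
    intro x hx
    have hsym' : IsConjSymm (w' x) :=
      (hw x hx).isConjSymm (uniqueDiffOn_Icc hab x hx) hx hsym
    have h := (hw x hx).star.dotProduct ((hw x hx).matrix_mulVec B)
    rwa [hB.star_dotProduct_mulVec_comm (hsym x hx) hsym', ← two_mul] at h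
  have hwc : ContinuousOn w (Icc a b) := fun x hx => (hw x hx).continuousWithinAt
  have hFTC := intervalIntegral.integral_eq_sub_of_hasDeriv_right_of_le hab.le
    (fun x hx => (hderiv x hx).continuousWithinAt)
    (fun x hx => ((hderiv x (Ioo_subset_Icc_self hx)).hasDerivAt
      (Icc_mem_nhds hx.1 hx.2)).hasDerivWithinAt)
    ((continuousOn_const.mul
      (hwc.star.dotProduct (continuousOn_const.matrix_mulVec hw'))).intervalIntegrable_of_Icc
      hab.le)
  simpa [ha, hb] using hFTC

theorem glsForm_eq_of_isConjSymm {N : ℕ} (ω : ℝ) (u : ℤ → ℂ) (κ : ℝ) {L : ℝ} (hL : 0 ≤ L)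
    {τ : ℝ → Matrix (Fin (2 * N - 1)) (Fin (2 * N - 1)) ℂ} (hτ : ContinuousOn τ (Icc 0 L))
    {w w' w'' : ℝ → Fin (2 * N - 1) → ℂ} (hw : ContinuousOn w (Icc 0 L))
    (hw' : ContinuousOn w' (Icc 0 L)) (hw'' : ContinuousOn w'' (Icc 0 L))
    (hsym : ∀ x, IsConjSymm (w x)) :
    glsForm N ω u κ L τ w w' w''
      = (∫ x in (0 : ℝ)..L, star (w x) ⬝ᵥ convMat N u *ᵥ w' x)
        + (∫ x in (0 : ℝ)..L, (κ : ℂ) * (star (w' x) ⬝ᵥ w' x))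
        + ∫ x in (0 : ℝ)..L, star (glsResidual N ω u κ w w' w'' x) ⬝ᵥ
            τ x *ᵥ glsResidual N ω u κ w w' w'' x := by
  have hr : ContinuousOn (glsResidual N ω u κ w w' w'') (Icc 0 L) :=
    ((continuousOn_const.matrix_mulVec hw).add (continuousOn_const.matrix_mulVec hw')).sub
      (hw''.const_smul (κ : ℂ))
  have hconv : IntervalIntegrable (fun x => star (w x) ⬝ᵥ convMat N u *ᵥ w' x) volume 0 L :=
    (hw.star.dotProduct (continuousOn_const.matrix_mulVec hw')).intervalIntegrable_of_Icc hL
  have hdiff : IntervalIntegrable (fun x => (κ : ℂ) * (star (w' x) ⬝ᵥ w' x)) volume 0 L :=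
    (continuousOn_const.mul (hw'.star.dotProduct hw')).intervalIntegrable_of_Icc hL
  have hstab : IntervalIntegrable (fun x => star (glsResidual N ω u κ w w' w'' x) ⬝ᵥ
      τ x *ᵥ glsResidual N ω u κ w w' w'' x) volume 0 L :=
    (hr.star.dotProduct (hτ.matrix_mulVec hr)).intervalIntegrable_of_Icc hL
  rw [← intervalIntegral.integral_add hconv hdiff,
    ← intervalIntegral.integral_add (hconv.add hdiff) hstab]
  simp only [glsForm, timeDerivMat_star_dotProduct_mulVec_self ω (hsym _), zero_add]

theorem stmt_3_general (N : ℕ) (ω : ℝ)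
    (u : ℤ → ℂ)
    (κ L : ℝ) (hκ : 0 < κ) (hL : 0 < L)
    (τ : ℝ → Matrix (Fin (2 * N - 1)) (Fin (2 * N - 1)) ℂ)
    (hτcont : ContinuousOn τ (Set.Icc 0 L))
    (hτ : ∀ x ∈ Set.Icc (0 : ℝ) L, (τ x).PosSemidef)
    (w w' w'' : ℝ → Fin (2 * N - 1) → ℂ)
    (hw1 : ∀ x ∈ Set.Icc (0 : ℝ) L, HasDerivWithinAt w (w' x) (Set.Icc 0 L) x)
    (hw2 : ∀ x ∈ Set.Icc (0 : ℝ) L, HasDerivWithinAt w' (w'' x) (Set.Icc 0 L) x)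
    (hw''cont : ContinuousOn w'' (Set.Icc 0 L))
    (hw0 : w 0 = 0) (hwL : w L = 0)
    (hsym : ∀ x : ℝ, ∀ i, w x (Fin.rev i) = starRingEnd ℂ (w x i)) :
    glsForm N ω u κ L τ w w' w''
        = ((κ * ∫ x in (0 : ℝ)..L, ∑ i, ‖w' x i‖ ^ 2 : ℝ) : ℂ)
          + ∫ x in (0 : ℝ)..L,
              star (glsResidual N ω u κ w w' w'' x) ⬝ᵥ
                (τ x).mulVec (glsResidual N ω u κ w w' w'' x) ∧
      (glsForm N ω u κ L τ w w' w'').im = 0 ∧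
      0 ≤ (glsForm N ω u κ L τ w w' w'').re := by
  have hw'c : ContinuousOn w' (Icc 0 L) := fun x hx => (hw2 x hx).continuousWithinAt
  have hconv : ∫ x in (0 : ℝ)..L, star (w x) ⬝ᵥ convMat N u *ᵥ w' x = 0 :=
    (convMat_isPersymm N u).integral_star_dotProduct_mulVec_deriv_eq_zero hL hw1 hw'c
      (fun x _ => hsym x) hw0 hwL
  have hmain : glsForm N ω u κ L τ w w' w''
      = ((κ * ∫ x in (0 : ℝ)..L, ∑ i, ‖w' x i‖ ^ 2 : ℝ) : ℂ)
        + ∫ x in (0 : ℝ)..L, star (glsResidual N ω u κ w w' w'' x) ⬝ᵥ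
            τ x *ᵥ glsResidual N ω u κ w w' w'' x := by
    rw [glsForm_eq_of_isConjSymm ω u κ hL.le hτcont (fun x hx => (hw1 x hx).continuousWithinAt)
      hw'c hw''cont hsym, hconv, zero_add]
    simp only [star_dotProduct_self_eq_sum_norm_sq, intervalIntegral.integral_const_mul,
      Complex.ofReal_mul]
    rw [intervalIntegral.integral_ofReal]
  have hnonneg : 0 ≤ glsForm N ω u κ L τ w w' w'' := hmain ▸ add_nonneg
    (Complex.zero_le_real.2 (mul_nonneg hκ.le (intervalIntegral.integral_nonneg hL.le
      fun x _ => by positivity)))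
    (intervalIntegral.integral_complex_nonneg hL.le fun x hx =>
      (hτ x hx).dotProduct_mulVec_nonneg _)
  exact ⟨hmain, (Complex.nonneg_iff.1 hnonneg).2.symm, (Complex.nonneg_iff.1 hnonneg).1⟩

/-- (Stability of the GLS form, one-dimensional Dirichlet case.)
For a conjugate-symmetric, twice continuously differentiable `w` vanishing at `0` and `L`,
and pointwise Hermitian positive semidefinite `τ`,
`b(w,w) = κ ∫₀^L ‖w'‖² + ∫₀^L r^H τ r`; in particular `b(w,w)` is a nonnegative real. -/
theorem stmt_3 (N : ℕ) (hN : 1 ≤ N) (ω : ℝ)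
    (u : ℤ → ℂ) (hu : ∀ k : ℤ, u (-k) = starRingEnd ℂ (u k))
    (hu0 : ∀ k : ℤ, (N : ℤ) ≤ |k| → u k = 0)
    (κ L : ℝ) (hκ : 0 < κ) (hL : 0 < L)
    (τ : ℝ → Matrix (Fin (2 * N - 1)) (Fin (2 * N - 1)) ℂ)
    (hτcont : ContinuousOn τ (Set.Icc 0 L))
    (hτ : ∀ x ∈ Set.Icc (0 : ℝ) L, (τ x).PosSemidef)
    (w w' w'' : ℝ → Fin (2 * N - 1) → ℂ)
    (hw1 : ∀ x ∈ Set.Icc (0 : ℝ) L, HasDerivWithinAt w (w' x) (Set.Icc 0 L) x)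
    (hw2 : ∀ x ∈ Set.Icc (0 : ℝ) L, HasDerivWithinAt w' (w'' x) (Set.Icc 0 L) x)
    (hw''cont : ContinuousOn w'' (Set.Icc 0 L))
    (hw0 : w 0 = 0) (hwL : w L = 0)
    (hsym : ∀ x : ℝ, ∀ i, w x (Fin.rev i) = starRingEnd ℂ (w x i)) :
    glsForm N ω u κ L τ w w' w''
        = ((κ * ∫ x in (0 : ℝ)..L, ∑ i, ‖w' x i‖ ^ 2 : ℝ) : ℂ)
          + ∫ x in (0 : ℝ)..L,
              star (glsResidual N ω u κ w w' w'' x) ⬝ᵥ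
                (τ x).mulVec (glsResidual N ω u κ w w' w'' x) ∧
      (glsForm N ω u κ L τ w w' w'').im = 0 ∧
      0 ≤ (glsForm N ω u κ L τ w w' w'').re :=
  stmt_3_general N ω u κ L hκ hL τ hτcont hτ w w' w'' hw1 hw2 hw''cont hw0 hwL hsym
end

section
/- Let M ≥ 1, let S ∈ ℂ^{M×M} be Hermitian positive semidefinite, let c > 0, and let τ be the unique positive semidefinite square root of (S + c·I)⁻¹. Then S·τ = τ·S, the matrix S·τ is Hermitian positive semidefinite, and S^{1/2} − S·τ is positive semidefinite, i.e. S·τ ⪯ S^{1/2} in the Loewner order, where S^{1/2} is the unique positive semidefinite square root of S. -/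
/-!
`τ`, `S` and `√S` are all continuous functions of `S`: by uniqueness of positive square roots,
`τ = f(S)` with `f s = √((s + c)⁻¹)`. So `S` and `τ` commute, and through the continuous
functional calculus the order claims reduce to the scalar facts `0 ≤ s f(s) ≤ √s` for `s ≥ 0`,
the latter being `√s ≤ √(s + c)`.
-/

open Matrix ComplexOrder
open scoped MatrixOrder

lemma Real.continuousOn_sqrt_inv_add {c : ℝ} (hc : 0 < c) :
    ContinuousOn (fun s ↦ √((s + c)⁻¹)) (Set.Ici 0) :=
  ((continuousOn_id.add continuousOn_const).inv₀
    fun _ hs ↦ (add_pos_of_nonneg_of_pos hs hc).ne').sqrt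

lemma Real.mul_sqrt_inv_add_le_sqrt {s c : ℝ} (hs : 0 ≤ s) (hc : 0 ≤ c) :
    s * √((s + c)⁻¹) ≤ √s := calc
  s * √((s + c)⁻¹) = √s * (√s / √(s + c)) := by
    rw [Real.sqrt_inv, mul_div_assoc', Real.mul_self_sqrt hs, div_eq_mul_inv]
  _ ≤ √s * 1 := by
    gcongr
    exact div_le_one_of_le₀ (Real.sqrt_le_sqrt (by linarith)) (Real.sqrt_nonneg _)
  _ = √s := mul_one _

namespace CFC

variable {A : Type*} [PartialOrder A] [Ring A] [StarRing A] [TopologicalSpace A]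
  [StarOrderedRing A] [Algebra ℝ A] [ContinuousFunctionalCalculus ℝ A IsSelfAdjoint]
  [NonnegSpectrumClass ℝ A] {a t : A} {c : ℝ}

lemma mul_cfc_sqrt_inv_add (ha : 0 ≤ a) (hc : 0 < c) :
    a * cfc (fun s ↦ √((s + c)⁻¹)) a = cfc (fun s ↦ s * √((s + c)⁻¹)) a := by
  have hcont := (Real.continuousOn_sqrt_inv_add hc).mono (t := spectrum ℝ a)
    (spectrum_nonneg_of_nonneg ha)
  rw [cfc_mul (fun s ↦ s) _ a (hg := hcont), cfc_id' ℝ a]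

lemma mul_cfc_sqrt_inv_add_nonneg (ha : 0 ≤ a) (hc : 0 < c) :
    0 ≤ a * cfc (fun s ↦ √((s + c)⁻¹)) a := by
  rw [mul_cfc_sqrt_inv_add ha hc]
  exact cfc_nonneg fun s hs ↦ mul_nonneg (spectrum_nonneg_of_nonneg ha hs) (Real.sqrt_nonneg _)

variable [IsSemitopologicalRing A] [T2Space A]

lemma eq_cfc_sqrt_inv_add_of_mul_self_eq_inverse (ha : 0 ≤ a) (hc : 0 < c) (ht : 0 ≤ t)
    (h : t * t = Ring.inverse (a + algebraMap ℝ A c)) : t = cfc (fun s ↦ √((s + c)⁻¹)) a := by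
  have hpos : ∀ s ∈ spectrum ℝ a, 0 < s + c := fun s hs ↦
    add_pos_of_nonneg_of_pos (spectrum_nonneg_of_nonneg ha hs) hc
  have hcont := (Real.continuousOn_sqrt_inv_add hc).mono (t := spectrum ℝ a)
    (spectrum_nonneg_of_nonneg ha)
  have hinv : Ring.inverse (a + algebraMap ℝ A c) = cfc (fun s ↦ (s + c)⁻¹) a := by
    rw [cfc_inv (fun s ↦ s + c) a fun s hs ↦ (hpos s hs).ne', cfc_add_const c (fun s ↦ s) a,
      cfc_id' ℝ a]
  have hsq : cfc (fun s ↦ (s + c)⁻¹) a =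
      cfc (fun s ↦ √((s + c)⁻¹)) a * cfc (fun s ↦ √((s + c)⁻¹)) a := by
    rw [← cfc_mul _ _ a hcont hcont]
    exact cfc_congr fun s hs ↦ (Real.mul_self_sqrt (inv_pos.2 (hpos s hs)).le).symm
  rwa [← mul_self_eq_mul_self_iff t _ ht (cfc_nonneg fun s _ ↦ Real.sqrt_nonneg _), ← hsq, ← hinv]

lemma mul_cfc_sqrt_inv_add_le_sqrt (ha : 0 ≤ a) (hc : 0 < c) :
    a * cfc (fun s ↦ √((s + c)⁻¹)) a ≤ sqrt a := by
  have hcont := (Real.continuousOn_sqrt_inv_add hc).mono (t := spectrum ℝ a)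
    (spectrum_nonneg_of_nonneg ha)
  rw [mul_cfc_sqrt_inv_add ha hc, sqrt_eq_real_sqrt a ha, cfcₙ_eq_cfc]
  exact cfc_mono (hf := continuousOn_id.mul hcont)
    fun s hs ↦ Real.mul_sqrt_inv_add_le_sqrt (spectrum_nonneg_of_nonneg ha hs) hc.le

end CFC

theorem stmt_11_general (M : ℕ)
    (S : Matrix (Fin M) (Fin M) ℂ) (hS : S.PosSemidef)
    (c : ℝ) (hc : 0 < c)
    (τ : Matrix (Fin M) (Fin M) ℂ) (hτ : τ.PosSemidef)
    (hτsq : τ * τ = (S + (c : ℂ) • (1 : Matrix (Fin M) (Fin M) ℂ))⁻¹) :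
    S * τ = τ * S ∧ (S * τ).PosSemidef ∧
      ∀ R : Matrix (Fin M) (Fin M) ℂ, R.PosSemidef → R * R = S →
        (R - S * τ).PosSemidef := by
  have hcI : (c : ℂ) • (1 : Matrix (Fin M) (Fin M) ℂ) = algebraMap ℝ _ c := by
    rw [Algebra.algebraMap_eq_smul_one, Complex.coe_smul]
  obtain rfl : τ = cfc (fun s ↦ √((s + c)⁻¹)) S :=
    CFC.eq_cfc_sqrt_inv_add_of_mul_self_eq_inverse hS.nonneg hc hτ.nonneg
      (by rw [hτsq, nonsing_inv_eq_ringInverse, hcI])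
  refine ⟨?_, nonneg_iff_posSemidef.1 (CFC.mul_cfc_sqrt_inv_add_nonneg hS.nonneg hc),
    fun R hR hRR ↦ ?_⟩
  · simpa only [cfc_id' ℝ S] using (cfc_commute_cfc (fun s ↦ s) (fun s ↦ √((s + c)⁻¹)) S).eq
  · rw [← le_iff, ← CFC.sqrt_unique hRR hR.nonneg]
    exact CFC.mul_cfc_sqrt_inv_add_le_sqrt hS.nonneg hc

/-- With `S` Hermitian positive semidefinite, `c > 0`, and `τ` the unique
positive semidefinite square root of `(S + c I)⁻¹`: `S` and `τ` commute, `S τ` is Hermitian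
positive semidefinite, and `S τ ⪯ S^{1/2}` in the Loewner order. -/
theorem stmt_11 (M : ℕ) (hM : 1 ≤ M)
    (S : Matrix (Fin M) (Fin M) ℂ) (hS : S.PosSemidef)
    (c : ℝ) (hc : 0 < c)
    (τ : Matrix (Fin M) (Fin M) ℂ) (hτ : τ.PosSemidef)
    (hτsq : τ * τ = (S + (c : ℂ) • (1 : Matrix (Fin M) (Fin M) ℂ))⁻¹) :
    S * τ = τ * S ∧ (S * τ).PosSemidef ∧
      ∀ R : Matrix (Fin M) (Fin M) ℂ, R.PosSemidef → R * R = S →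
        (R - S * τ).PosSemidef :=
  stmt_11_general M S hS c hc τ hτ hτsq
end
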